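/- arXiv:1604.03047 — 3 statements merged into one kernel-verified Lean document; each statement's English description precedes it below -/
import Mathlib

section
/- Let m ∈ ℕ be fixed and (l_n) a sequence of natural numbers with l_n ≤ n - m. If the sequence of ratios C(n-m, l_n)/C(n, l_n) converges as n → ∞, then the sequence l_n/n converges to some α ∈ [0,1]. -/
/-!
Choosing `l` and then `m` elements of an `n`-set in either order gives
`C(n-m, l) / C(n, l) = (n-l)_m / (n)_m` (falling factorials), and both falling factorials are
squeezed between `(k+1-m)^m` and `k^m`. So the `m`-th root of the ratio differs from
`(n - l_n) / n` by `O(1/n)`, and `l_n / n` tends to one minus the `m`-th root of the limit.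
-/

open Filter Topology

theorem Nat.choose_sub_mul_choose (n l m : ℕ) :
    (n - m).choose l * n.choose m = n.choose l * (n - l).choose m := by
  have hl := Nat.choose_mul (n := n) (Nat.le_add_right l m)
  have hm := Nat.choose_mul (n := n) (Nat.le_add_left m l)
  rw [Nat.add_sub_cancel_left] at hl
  rw [Nat.add_sub_cancel] at hm
  rw [mul_comm, ← hm, ← hl, Nat.choose_symm_add]

theorem Nat.cast_choose_sub_div_cast_choose {n l m : ℕ} (h : l + m ≤ n) :
    ((n - m).choose l : ℝ) / n.choose l =
      ((n - l).descFactorial m : ℝ) / n.descFactorial m := by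
  have hl : (n.choose l : ℝ) ≠ 0 := by exact_mod_cast (Nat.choose_pos (by omega)).ne'
  have hm : (n.descFactorial m : ℝ) ≠ 0 := by
    exact_mod_cast (Nat.descFactorial_pos.2 (by omega)).ne'
  rw [div_eq_div_iff hl hm, Nat.descFactorial_eq_factorial_mul_choose,
    Nat.descFactorial_eq_factorial_mul_choose]
  exact_mod_cast by rw [mul_left_comm, Nat.choose_sub_mul_choose]; ring

section DescFactorialRatio

variable {a n m : ℕ}

theorem Nat.cast_descFactorial_div_le (hm : m ≤ n) :
    (a.descFactorial m : ℝ) / n.descFactorial m ≤ (a / ((n : ℝ) + 1 - m)) ^ m := by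
  have hn : ((n + 1 - m : ℕ) : ℝ) = (n : ℝ) + 1 - m := by
    rw [Nat.cast_sub (by omega), Nat.cast_succ]
  rw [div_pow, ← hn]
  refine div_le_div₀ (by positivity) (by exact_mod_cast Nat.descFactorial_le_pow a m)
    (by have : 0 < n + 1 - m := by omega
        positivity)
    (by exact_mod_cast Nat.pow_sub_le_descFactorial n m)

theorem Nat.div_le_cast_descFactorial_div (hma : m ≤ a) (han : a ≤ n) :
    (((a : ℝ) + 1 - m) / n) ^ m ≤ (a.descFactorial m : ℝ) / n.descFactorial m := by
  have ha : ((a + 1 - m : ℕ) : ℝ) = (a : ℝ) + 1 - m := by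
    rw [Nat.cast_sub (by omega), Nat.cast_succ]
  rw [div_pow, ← ha]
  exact div_le_div₀ (by positivity) (by exact_mod_cast Nat.pow_sub_le_descFactorial a m)
    (by exact_mod_cast Nat.descFactorial_pos.2 (by omega))
    (by exact_mod_cast Nat.descFactorial_le_pow n m)

end DescFactorialRatio

theorem tendsto_cast_div_of_tendsto_descFactorial_div {m : ℕ} (hm : m ≠ 0) {a : ℕ → ℕ}
    (ha : ∀ n, a n ≤ n) (hma : ∀ᶠ n in atTop, m ≤ a n) {L : ℝ}
    (hL : Tendsto (fun n => ((a n).descFactorial m : ℝ) / n.descFactorial m) atTop (𝓝 L)) :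
    Tendsto (fun n => (a n : ℝ) / n) atTop (𝓝 (L ^ (m⁻¹ : ℝ))) := by
  set r := fun n => ((a n).descFactorial m : ℝ) / n.descFactorial m
  have hr : ∀ n, 0 ≤ r n := fun n => by positivity
  have hroot := hL.rpow_const (p := (m⁻¹ : ℝ)) (Or.inr (by positivity))
  have hε : Tendsto (fun n : ℕ => ((m : ℝ) - 1) / n) atTop (𝓝 0) :=
    tendsto_const_div_atTop_nhds_zero_nat _
  refine tendsto_of_tendsto_of_tendsto_of_le_of_le'
    (by simpa using hroot.mul ((tendsto_const_nhds (x := (1 : ℝ))).sub hε))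
    (by simpa using hroot.add hε) ?_ ?_
  all_goals filter_upwards [hma, eventually_gt_atTop 0] with n hman hn
  · have hpos : (0 : ℝ) < n + 1 - m := by
      have : (m : ℝ) ≤ n := by exact_mod_cast hman.trans (ha n)
      linarith
    have hle : r n ^ (m⁻¹ : ℝ) ≤ a n / ((n : ℝ) + 1 - m) :=
      le_of_pow_le_pow_left₀ hm (by positivity) <| by
        rw [Real.rpow_inv_natCast_pow (hr n) hm]
        exact Nat.cast_descFactorial_div_le (hman.trans (ha n))
    rw [le_div_iff₀ hpos] at hle
    calc r n ^ (m⁻¹ : ℝ) * (1 - ((m : ℝ) - 1) / n)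
        = r n ^ (m⁻¹ : ℝ) * (n + 1 - m) / n := by field_simp; ring
      _ ≤ a n / n := by gcongr
  · have hle : ((a n : ℝ) + 1 - m) / n ≤ r n ^ (m⁻¹ : ℝ) :=
      le_of_pow_le_pow_left₀ hm (by positivity) <| by
        rw [Real.rpow_inv_natCast_pow (hr n) hm]
        exact Nat.div_le_cast_descFactorial_div hman (ha n)
    calc (a n : ℝ) / n = ((a n : ℝ) + 1 - m) / n + ((m : ℝ) - 1) / n := by ring
      _ ≤ r n ^ (m⁻¹ : ℝ) + ((m : ℝ) - 1) / n := by gcongr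

theorem binom_ratio_converges_implies_ratio_converges (m : ℕ) (hm : 1 ≤ m)
    (l : ℕ → ℕ) (hl : ∀ n, l n ≤ n - m)
    (hconv : ∃ L : ℝ, Tendsto (fun n => ((n - m).choose (l n) : ℝ) / (n.choose (l n)))
      atTop (nhds L)) :
    ∃ α : ℝ, α ∈ Set.Icc (0:ℝ) 1 ∧ Tendsto (fun n => (l n : ℝ) / n) atTop (nhds α) := by
  obtain ⟨L, hL⟩ := hconv
  have hlm : ∀ᶠ n in atTop, l n + m ≤ n := by
    filter_upwards [eventually_ge_atTop m] with n hn
    have := hl n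
    omega
  have hfalling : Tendsto (fun n => ((n - l n).descFactorial m : ℝ) / n.descFactorial m)
      atTop (𝓝 L) :=
    hL.congr' <| hlm.mono fun n h => Nat.cast_choose_sub_div_cast_choose h
  have hcompl := tendsto_cast_div_of_tendsto_descFactorial_div (by omega)
    (fun n => Nat.sub_le n (l n)) (hlm.mono fun n h => by omega) hfalling
  have hratio : Tendsto (fun n => (l n : ℝ) / n) atTop (𝓝 (1 - L ^ (m⁻¹ : ℝ))) := by
    refine ((tendsto_const_nhds (x := (1 : ℝ))).sub hcompl).congr' ?_
    filter_upwards [hlm, eventually_gt_atTop 0] with n hlmn hn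
    rw [Nat.cast_sub (by omega)]
    field_simp
    ring
  have hunit : ∀ n, (l n : ℝ) / n ∈ Set.Icc (0 : ℝ) 1 := fun n =>
    ⟨by positivity,
      div_le_one_of_le₀ (by exact_mod_cast (hl n).trans (Nat.sub_le n m)) n.cast_nonneg⟩
  exact ⟨_, isClosed_Icc.mem_of_tendsto hratio (.of_forall hunit), hratio⟩
end

section
/- Let ξ_1, ξ_2, … be i.i.d. geometric random variables with parameter θ ∈ (0,1) on ℕ, and let M_n, L_n be the running maximum and its multiplicity. For n > m and l ≥ k, P(M_n = i, L_n = l | M_m = i, L_m = k) = C(n-m, l-k) (θ(1-θ)^{i-1})^{l-k} (1-(1-θ)^{i-1})^{n-m-(l-k)}. -/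
/-!
Given `M_m = i` and `L_m = k`, the event `{M_n = i, L_n = l}` says exactly that the new variables
`ξ_m, …, ξ_{n-1}` are all `≤ i` and that `l - k` of them equal `i`. This event only involves the
coordinates in `[m, n)`, so it is independent of the conditioning event, which only involves the
coordinates below `m`; hence the conditional probability is its unconditional one. By independence
again it is binomial, each new coordinate being `= i` with probability `θ(1-θ)^(i-1)` and `< i`
with probability `1 - (1-θ)^(i-1)`.
-/

open MeasureTheory ProbabilityTheory Finset

theorem sup_union_eq_and_card_filter_eq_iff {ι α : Type*} [DecidableEq ι] [SemilatticeSup α]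
    [OrderBot α] [DecidableEq α] {s t : Finset ι} (hst : Disjoint s t) {x : ι → α} {i : α}
    {k l : ℕ} (hkl : k ≤ l) (hsup : s.sup x = i) (hcard : #{a ∈ s | x a = i} = k) :
    ((s ∪ t).sup x = i ∧ #{a ∈ s ∪ t | x a = (s ∪ t).sup x} = l) ↔
      (#{a ∈ t | x a = i} = l - k ∧ ∀ a ∈ t, x a ≤ i) := by
  have hsup_union : (s ∪ t).sup x = i ↔ ∀ a ∈ t, x a ≤ i := by
    rw [sup_union, hsup, sup_eq_left, Finset.sup_le_iff]
  have hcount : #{a ∈ s ∪ t | x a = i} = k + #{a ∈ t | x a = i} := by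
    rw [filter_union, card_union_of_disjoint (hst.mono (filter_subset _ _) (filter_subset _ _)),
      hcard]
  constructor
  · rintro ⟨hmax, hmult⟩
    rw [hmax] at hmult
    exact ⟨by omega, hsup_union.1 hmax⟩
  · rintro ⟨hmult, hle⟩
    have hmax := hsup_union.2 hle
    exact ⟨hmax, by rw [hmax]; omega⟩

theorem forall_mem_ite_iff_filter_eq {ι β : Type*} {s t : Set β} [DecidablePred (· ∈ s)]
    (hst : Disjoint s t) {S T : Finset ι} [DecidablePred (· ∈ S)] (hS : S ⊆ T) (x : ι → β) :
    (∀ a ∈ T, x a ∈ if a ∈ S then s else t) ↔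
      {a ∈ T | x a ∈ s} = S ∧ ∀ a ∈ T, x a ∈ s ∪ t := by
  constructor
  · intro h
    refine ⟨?_, fun a ha => ?_⟩
    · ext a
      simp only [mem_filter]
      constructor
      · rintro ⟨ha, hs⟩
        by_contra haS
        have ht := h a ha
        rw [if_neg haS] at ht
        exact hst.notMem_of_mem_left hs ht
      · intro haS
        have hs := h a (hS haS)
        rw [if_pos haS] at hs
        exact ⟨hS haS, hs⟩
    · have := h a ha
      split_ifs at this
      exacts [Or.inl this, Or.inr this]
  · rintro ⟨hfilter, hunion⟩ a ha
    split_ifs with haS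
    · rw [← hfilter] at haS
      exact (mem_filter.1 haS).2
    · refine (hunion a ha).resolve_left fun hs => haS ?_
      rw [← hfilter]
      exact mem_filter.2 ⟨ha, hs⟩

def DeterminedBy {Ω ι β : Type*} (ξ : ι → Ω → β) (S : Finset ι) (A : Set Ω) : Prop :=
  ∀ ⦃ω ω'⦄, (∀ a ∈ S, ξ a ω = ξ a ω') → ω ∈ A → ω' ∈ A

namespace DeterminedBy

variable {Ω ι β : Type*} {ξ : ι → Ω → β}

theorem preimage_image {S : Finset ι} {A : Set Ω} (hA : DeterminedBy ξ S A) :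
    (fun ω (a : S) => ξ a ω) ⁻¹' ((fun ω (a : S) => ξ a ω) '' A) = A := by
  ext ω
  exact ⟨fun ⟨ω', hω', heq⟩ => hA (fun a ha => congrFun heq ⟨a, ha⟩) hω',
    fun hω => ⟨ω, hω, rfl⟩⟩

theorem card_filter_mem_eq_and_forall_mem (T : Finset ι) (s u : Set β) [DecidablePred (· ∈ s)]
    (j : ℕ) : DeterminedBy ξ T {ω | #{a ∈ T | ξ a ω ∈ s} = j ∧ ∀ a ∈ T, ξ a ω ∈ u} := by
  intro ω ω' h ⟨hcard, hmem⟩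
  refine ⟨?_, fun a ha => h a ha ▸ hmem a ha⟩
  rw [← hcard]
  exact congrArg card (filter_congr fun a ha => by rw [h a ha])

theorem sup_eq_and_card_filter_eq [SemilatticeSup β] [OrderBot β] [DecidableEq β] (S : Finset ι)
    (i : β) (k : ℕ) :
    DeterminedBy ξ S {ω | S.sup (ξ · ω) = i ∧ #{a ∈ S | ξ a ω = S.sup (ξ · ω)} = k} := by
  intro ω ω' h ⟨hsup, hcard⟩
  have hsup_eq : S.sup (ξ · ω) = S.sup (ξ · ω') := sup_congr rfl h
  refine ⟨hsup_eq ▸ hsup, ?_⟩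
  rw [← hcard, hsup_eq]
  exact congrArg card (filter_congr fun a ha => by rw [h a ha])

end DeterminedBy

section Independence

variable {Ω ι β : Type*} [MeasurableSpace Ω] [MeasurableSpace β] {P : Measure Ω}
  {ξ : ι → Ω → β}

theorem ProbabilityTheory.iIndepFun.measure_card_filter_mem_eq_and_forall_mem_union
    (hmeas : ∀ a, Measurable (ξ a)) (hindep : iIndepFun ξ P) {s t : Set β}
    [DecidablePred (· ∈ s)] (hs : MeasurableSet s) (ht : MeasurableSet t) (hst : Disjoint s t)
    (T : Finset ι) (j : ℕ) {p q : ENNReal}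
    (hp : ∀ a ∈ T, P (ξ a ⁻¹' s) = p) (hq : ∀ a ∈ T, P (ξ a ⁻¹' t) = q) :
    P {ω | #{a ∈ T | ξ a ω ∈ s} = j ∧ ∀ a ∈ T, ξ a ω ∈ s ∪ t} =
      T.card.choose j * (p ^ j * q ^ (T.card - j)) := by
  classical
  let D (S : Finset ι) : Set Ω := ⋂ a ∈ T, ξ a ⁻¹' (if a ∈ S then s else t)
  have hD : ∀ S ⊆ T, ∀ ω, ω ∈ D S ↔ {a ∈ T | ξ a ω ∈ s} = S ∧ ∀ a ∈ T, ξ a ω ∈ s ∪ t := by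
    intro S hS ω
    simpa [D] using forall_mem_ite_iff_filter_eq hst hS (fun a => ξ a ω)
  have hunion : {ω | #{a ∈ T | ξ a ω ∈ s} = j ∧ ∀ a ∈ T, ξ a ω ∈ s ∪ t} =
      ⋃ S ∈ T.powersetCard j, D S := by
    ext ω
    simp only [Set.mem_ofPred_eq, Set.mem_iUnion, mem_powersetCard, exists_prop]
    constructor
    · rintro ⟨hcard, hall⟩
      exact ⟨_, ⟨filter_subset _ _, hcard⟩, (hD _ (filter_subset _ _) ω).2 ⟨rfl, hall⟩⟩
    · rintro ⟨S, ⟨hS, rfl⟩, hω⟩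
      obtain ⟨rfl, hall⟩ := (hD S hS ω).1 hω
      exact ⟨rfl, hall⟩
  have hdisj : (T.powersetCard j : Set (Finset ι)).PairwiseDisjoint D := by
    intro S hS S' hS' hne
    refine Set.disjoint_left.2 fun ω hω hω' => hne ?_
    rw [← ((hD S (mem_powersetCard.1 hS).1 ω).1 hω).1,
      ((hD S' (mem_powersetCard.1 hS').1 ω).1 hω').1]
  have hpiece : ∀ S ∈ T.powersetCard j, P (D S) = p ^ j * q ^ (T.card - j) := by
    intro S hS
    obtain ⟨hST, hcard⟩ := mem_powersetCard.1 hS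
    have hsets : ∀ a ∈ T, MeasurableSet (if a ∈ S then s else t) := fun a _ => by
      split_ifs
      exacts [hs, ht]
    have hfactor : ∀ a ∈ T, P (ξ a ⁻¹' if a ∈ S then s else t) = if a ∈ S then p else q :=
      fun a ha => by split_ifs; exacts [hp a ha, hq a ha]
    rw [hindep.measure_inter_preimage_eq_mul T hsets, prod_congr rfl hfactor, prod_ite,
      filter_mem_eq_inter, inter_eq_right.2 hST, ← sdiff_eq_filter, prod_const, prod_const,
      card_sdiff_of_subset hST, hcard]
  have hmeasD : ∀ S, MeasurableSet (D S) := fun S =>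
    .biInter T.countable_toSet fun a _ => hmeas a (by split_ifs; exacts [hs, ht])
  rw [hunion, measure_biUnion_finset hdisj fun S _ => hmeasD S, sum_congr rfl hpiece, sum_const,
    card_powersetCard, nsmul_eq_mul]

namespace DeterminedBy

variable {S T : Finset ι} {A B C : Set Ω} [Countable β] [MeasurableSingletonClass β]

theorem measurableSet (hmeas : ∀ a, Measurable (ξ a)) (hA : DeterminedBy ξ S A) :
    MeasurableSet A := by
  rw [← hA.preimage_image]
  exact measurable_pi_lambda (fun ω (a : S) => ξ a ω) (fun a => hmeas a)
    (Set.to_countable _).measurableSet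

theorem measure_inter_eq_mul (hmeas : ∀ a, Measurable (ξ a)) (hindep : iIndepFun ξ P)
    (hST : Disjoint S T) (hA : DeterminedBy ξ S A) (hB : DeterminedBy ξ T B) :
    P (A ∩ B) = P A * P B := by
  rw [← hA.preimage_image, ← hB.preimage_image]
  exact (hindep.indepFun_finset S T hST hmeas).measure_inter_preimage_eq_mul _ _
    (Set.to_countable _).measurableSet (Set.to_countable _).measurableSet

theorem cond_eq_of_inter_eq [IsFiniteMeasure P] (hmeas : ∀ a, Measurable (ξ a))
    (hindep : iIndepFun ξ P) (hST : Disjoint S T) (hB : DeterminedBy ξ S B)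
    (hC : DeterminedBy ξ T C) (hpos : P B ≠ 0) (hBA : B ∩ A = B ∩ C) : P[A | B] = P C := by
  rw [cond_apply (hB.measurableSet hmeas), hBA, hB.measure_inter_eq_mul hmeas hindep hST hC,
    ← mul_assoc, ENNReal.inv_mul_cancel hpos (measure_ne_top _ _), one_mul]

end DeterminedBy

end Independence

section Geometric

variable {Ω : Type*} [MeasurableSpace Ω] {P : Measure Ω} {θ : ℝ} {X : Ω → ℕ}

theorem hasSum_mul_one_sub_pow_add (hθ : θ ∈ Set.Ioo (0 : ℝ) 1) (c : ℕ) :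
    HasSum (fun j : ℕ => θ * (1 - θ) ^ (j + c)) ((1 - θ) ^ c) := by
  obtain ⟨hθ0, hθ1⟩ := hθ
  have hterm :
      (fun j : ℕ => θ * (1 - θ) ^ (j + c)) = fun j => θ * (1 - θ) ^ c * (1 - θ) ^ j := by
    ext j; rw [pow_add]; ring
  have hsum : θ * (1 - θ) ^ c * (1 - (1 - θ))⁻¹ = (1 - θ) ^ c := by
    rw [sub_sub_cancel]; field_simp
  have := (hasSum_geometric_of_lt_one (r := 1 - θ) (by linarith) (by linarith)).mul_left
    (θ * (1 - θ) ^ c)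
  rwa [hsum, ← hterm] at this

theorem measure_lt_of_geometric (hθ : θ ∈ Set.Ioo (0 : ℝ) 1) (hX : Measurable X)
    (hgeom : ∀ i : ℕ, P {ω | X ω = i + 1} = ENNReal.ofReal (θ * (1 - θ) ^ i)) (c : ℕ) :
    P {ω | c < X ω} = ENNReal.ofReal ((1 - θ) ^ c) := by
  have hunion : {ω | c < X ω} = ⋃ j : ℕ, {ω | X ω = j + c + 1} := by
    ext ω
    simp only [Set.mem_ofPred_eq, Set.mem_iUnion]
    exact ⟨fun h => ⟨X ω - c - 1, by omega⟩, fun ⟨j, hj⟩ => by omega⟩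
  have hdisj : Pairwise (Function.onFun Disjoint fun j : ℕ => {ω | X ω = j + c + 1}) :=
    fun j j' hne => Set.disjoint_left.2 fun ω (h : _ = _) (h' : _ = _) => hne (by omega)
  rw [hunion, measure_iUnion hdisj fun j => hX (measurableSet_singleton _),
    ← (hasSum_mul_one_sub_pow_add hθ c).tsum_eq,
    ENNReal.ofReal_tsum_of_nonneg (fun j => by have := hθ.1; have := hθ.2; positivity)
      (hasSum_mul_one_sub_pow_add hθ c).summable]
  exact tsum_congr fun j => hgeom (j + c)

theorem measure_le_of_geometric [IsProbabilityMeasure P] (hθ : θ ∈ Set.Ioo (0 : ℝ) 1)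
    (hX : Measurable X)
    (hgeom : ∀ i : ℕ, P {ω | X ω = i + 1} = ENNReal.ofReal (θ * (1 - θ) ^ i)) (c : ℕ) :
    P {ω | X ω ≤ c} = ENNReal.ofReal (1 - (1 - θ) ^ c) := by
  have hcompl : {ω | X ω ≤ c} = {ω | c < X ω}ᶜ := by ext ω; simp
  rw [hcompl, measure_compl (measurableSet_lt measurable_const hX) (measure_ne_top P _),
    measure_lt_of_geometric hθ hX hgeom, measure_univ, ← ENNReal.ofReal_one,
    ← ENNReal.ofReal_sub _ (pow_nonneg (by linarith [hθ.2]) _)]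

end Geometric

theorem geometric_max_multiplicity_cond_dist_general
    {Ω : Type*} [MeasurableSpace Ω] (P : Measure Ω) [IsProbabilityMeasure P]
    (θ : ℝ) (hθ : θ ∈ Set.Ioo (0:ℝ) 1)
    (ξ : ℕ → Ω → ℕ)
    (hmeas : ∀ a, Measurable (ξ a))
    (hindep : iIndepFun ξ P)
    (hgeom : ∀ a, ∀ i : ℕ, P {ω | ξ a ω = i + 1} = ENNReal.ofReal (θ * (1 - θ) ^ i))
    (M : ℕ → Ω → ℕ) (hM : ∀ n ω, M n ω = (Finset.range n).sup (fun a => ξ a ω))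
    (L : ℕ → Ω → ℕ)
    (hL : ∀ n ω, L n ω = ((Finset.range n).filter (fun a => ξ a ω = M n ω)).card)
    (m n i k l : ℕ) (hmn : m < n) (hi : 1 ≤ i) (hkl : k ≤ l)
    (hpos : P {ω | M m ω = i ∧ L m ω = k} ≠ 0) :
    P[{ω | M n ω = i ∧ L n ω = l} | {ω | M m ω = i ∧ L m ω = k}] =
      ENNReal.ofReal (((n - m).choose (l - k) : ℝ) * (θ * (1 - θ) ^ (i - 1)) ^ (l - k) *
        (1 - (1 - θ) ^ (i - 1)) ^ (n - m - (l - k))) := by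
  obtain rfl : M = fun n ω => (range n).sup (ξ · ω) := funext fun n => funext (hM n)
  obtain rfl : L = fun n ω => #{a ∈ range n | ξ a ω = (range n).sup (ξ · ω)} :=
    funext fun n => funext (hL n)
  obtain ⟨c, rfl⟩ : ∃ c, i = c + 1 := ⟨i - 1, by omega⟩
  have hrange : range n = range m ∪ Ico m n := by
    rw [range_eq_Ico, range_eq_Ico, Ico_union_Ico_eq_Ico (Nat.zero_le m) hmn.le]
  have hdisj : Disjoint (range m) (Ico m n) := by
    rw [range_eq_Ico]
    exact Ico_disjoint_Ico_consecutive 0 m n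
  have hB := DeterminedBy.sup_eq_and_card_filter_eq (ξ := ξ) (range m) (c + 1) k
  have hC := DeterminedBy.card_filter_mem_eq_and_forall_mem (ξ := ξ) (Ico m n) {c + 1}
    ({c + 1} ∪ Set.Iic c) (l - k)
  beta_reduce at hpos ⊢
  refine (hB.cond_eq_of_inter_eq hmeas hindep hdisj hC hpos ?_).trans ?_
  · ext ω
    refine and_congr_right fun ⟨hMm, hLm⟩ => ?_
    rw [hMm] at hLm
    rw [Set.mem_ofPred_eq, Set.mem_ofPred_eq, hrange]
    simpa [Nat.le_succ_iff, or_comm] using sup_union_eq_and_card_filter_eq_iff hdisj hkl hMm hLm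
  rw [hindep.measure_card_filter_mem_eq_and_forall_mem_union hmeas (measurableSet_singleton _)
      measurableSet_Iic (by simp) _ _ (fun a _ => hgeom a c)
      (fun a _ => measure_le_of_geometric hθ (hmeas a) (hgeom a) c),
    Nat.card_Ico, Nat.add_sub_cancel]
  have hθ0 : 0 ≤ θ := hθ.1.le
  have hθ1 : 0 ≤ 1 - θ := by linarith [hθ.2]
  have hpow : 0 ≤ 1 - (1 - θ) ^ c := sub_nonneg.2 (pow_le_one₀ hθ1 (by linarith))
  rw [← ENNReal.ofReal_natCast, ← ENNReal.ofReal_pow (by positivity), ← ENNReal.ofReal_pow hpow,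
    ← ENNReal.ofReal_mul (by positivity), ← ENNReal.ofReal_mul (by positivity), mul_assoc]

theorem geometric_max_multiplicity_cond_dist
    {Ω : Type*} [MeasurableSpace Ω] (P : Measure Ω) [IsProbabilityMeasure P]
    (θ : ℝ) (hθ : θ ∈ Set.Ioo (0:ℝ) 1)
    (ξ : ℕ → Ω → ℕ)
    (hmeas : ∀ a, Measurable (ξ a))
    (hindep : iIndepFun ξ P)
    (hgeom : ∀ a, ∀ i : ℕ, P {ω | ξ a ω = i + 1} = ENNReal.ofReal (θ * (1 - θ) ^ i))
    (M : ℕ → Ω → ℕ) (hM : ∀ n ω, M n ω = (Finset.range n).sup (fun a => ξ a ω))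
    (L : ℕ → Ω → ℕ)
    (hL : ∀ n ω, L n ω = ((Finset.range n).filter (fun a => ξ a ω = M n ω)).card)
    (m n i k l : ℕ) (hmn : m < n) (hi : 1 ≤ i) (hk : 1 ≤ k) (hkm : k ≤ m) (hkl : k ≤ l)
    (hln : l - k ≤ n - m)
    (hpos : P {ω | M m ω = i ∧ L m ω = k} ≠ 0) :
    P[{ω | M n ω = i ∧ L n ω = l} | {ω | M m ω = i ∧ L m ω = k}] =
      ENNReal.ofReal (((n - m).choose (l - k) : ℝ) * (θ * (1 - θ) ^ (i - 1)) ^ (l - k) *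
        (1 - (1 - θ) ^ (i - 1)) ^ (n - m - (l - k))) :=
  geometric_max_multiplicity_cond_dist_general P θ hθ ξ hmeas hindep hgeom M hM L hL m n i k l hmn
    hi hkl hpos
end

section
/- The bivariate process Y_n = (M_n, L_n) of the running maximum and its multiplicity of an i.i.d. geometric(θ) sequence is a Markov chain on ℕ × ℕ with transition probabilities: from (i,k) it moves to (j,1) with probability θ(1-θ)^{j-1} for j > i, to (i,k+1) with probability θ(1-θ)^{i-1}, stays at (i,k) with probability 1 - (1-θ)^{i-1}, and all other transitions have probability 0. -/
/-!
The pair `Yₙ₊₁` is a deterministic function of `Yₙ` and of the fresh variable `ξₙ`: a new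
maximum resets the multiplicity to one, a tie increments it, anything smaller leaves `Yₙ`
unchanged. The history event `{Y₁ = y₁, …, Yₙ = yₙ}` depends only on `ξ₀, …, ξₙ₋₁` and is
therefore independent of `ξₙ`, so conditionally on it `Yₙ₊₁ = (j, l)` has the probability that
`ξₙ` falls in the fibre of the update map over `(j, l)`. That fibre is `{j}`, `{i}`, `{x < i}` or
empty, with geometric probabilities `θ(1-θ)^(j-1)`, `θ(1-θ)^(i-1)` and `1 - (1-θ)^(i-1)`.
-/

open MeasureTheory ProbabilityTheory

/-- The transition probabilities of the chain of maxima and their multiplicities. -/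
def maxMultTrans (θ : ℝ) (i k j l : ℕ) : ℝ :=
  if i < j ∧ l = 1 then θ * (1 - θ) ^ (j - 1)
  else if j = i ∧ l = k + 1 then θ * (1 - θ) ^ (i - 1)
  else if j = i ∧ l = k then 1 - (1 - θ) ^ (i - 1)
  else 0

open Finset

def maxMult (x : ℕ → ℕ) (n : ℕ) : ℕ × ℕ :=
  ((range n).sup x, #{a ∈ range n | x a = (range n).sup x})

def maxMultStep (y : ℕ × ℕ) (x : ℕ) : ℕ × ℕ :=
  if y.1 < x then (x, 1) else if x = y.1 then (y.1, y.2 + 1) else y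

lemma maxMult_succ (x : ℕ → ℕ) (n : ℕ) :
    maxMult x (n + 1) = maxMultStep (maxMult x n) (x n) := by
  set i := (range n).sup x with hi
  have hle : ∀ a ∈ range n, x a ≤ i := fun a ha => le_sup ha
  simp only [maxMult, maxMultStep, range_add_one, sup_insert, ← hi]
  rcases lt_trichotomy i (x n) with h | h | h
  · have hempty : {a ∈ range n | x a = x n} = ∅ :=
      filter_eq_empty_iff.mpr fun a ha hxa => (hle a ha).not_gt (hxa ▸ h)
    simp [sup_eq_left.mpr h.le, h, filter_insert, hempty]
  · rw [← h, sup_idem, filter_insert, if_pos h.symm,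
      card_insert_of_notMem fun hm => notMem_range_self (mem_of_mem_filter n hm)]
    simp
  · rw [sup_eq_right.mpr h.le, filter_insert, if_neg h.ne, if_neg h.not_gt, if_neg h.ne]

lemma le_maxMult_fst (x : ℕ → ℕ) {a n : ℕ} (ha : a < n) : x a ≤ (maxMult x n).1 :=
  le_sup (mem_range.mpr ha)

lemma dependsOn_maxMult {s n : ℕ} (hs : s ≤ n) :
    DependsOn (maxMult · s) ↑(range n) := by
  intro x x' h
  have hx : ∀ a ∈ range s, x a = x' a := fun a ha =>
    h a (mem_range.mpr ((mem_range.mp ha).trans_le hs))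
  simp only [maxMult, sup_congr rfl hx]
  congr 1
  exact congrArg card (filter_congr fun a ha => by rw [hx a ha])

lemma dependsOn_forall_maxMult_eq (y : ℕ → ℕ × ℕ) (n : ℕ) :
    DependsOn (fun x => ∀ s ∈ Icc 1 n, maxMult x s = y s) ↑(range n) := fun x x' h =>
  propext <| forall₂_congr fun s hs => by
    rw [show maxMult x s = maxMult x' s from dependsOn_maxMult (mem_Icc.mp hs).2 h]

lemma setOf_maxMultStep_eq (i k j l : ℕ) :
    {x | maxMultStep (i, k) x = (j, l)} =
      if i < j ∧ l = 1 then {j}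
      else if j = i ∧ l = k + 1 then {i}
      else if j = i ∧ l = k then Set.Iio i
      else ∅ := by
  ext x
  simp only [maxMultStep, Set.mem_ofPred_eq]
  split_ifs <;> grind

section Geometric

variable {Ω : Type*} [MeasurableSpace Ω] {P : Measure Ω} [IsProbabilityMeasure P]
  {θ : ℝ} {X : Ω → ℕ}

lemma tsum_ofReal_geometric (hθ : θ ∈ Set.Ioo (0 : ℝ) 1) :
    ∑' i : ℕ, ENNReal.ofReal (θ * (1 - θ) ^ i) = 1 := by
  obtain ⟨hθ0, hθ1⟩ := hθ
  have hsum := (hasSum_geometric_of_lt_one (sub_nonneg.mpr hθ1.le) (sub_lt_self 1 hθ0)).mul_left θ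
  rw [sub_sub_cancel, mul_inv_cancel₀ hθ0.ne'] at hsum
  rw [← ENNReal.ofReal_tsum_of_nonneg (fun i => by positivity) hsum.summable, hsum.tsum_eq,
    ENNReal.ofReal_one]

lemma measure_eq_zero_of_geometric (hθ : θ ∈ Set.Ioo (0 : ℝ) 1) (hX : Measurable X)
    (hgeom : ∀ i : ℕ, P {ω | X ω = i + 1} = ENNReal.ofReal (θ * (1 - θ) ^ i)) :
    P {ω | X ω = 0} = 0 := by
  have hcompl : {ω | X ω = 0}ᶜ = ⋃ i : ℕ, {ω | X ω = i + 1} := by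
    ext ω
    simp only [Set.mem_compl_iff, Set.mem_ofPred_eq, Set.mem_iUnion]
    cases X ω <;> simp
  have hdisj : Pairwise (Function.onFun Disjoint fun i : ℕ => {ω | X ω = i + 1}) :=
    fun a b hab => Set.disjoint_left.mpr fun ω ha hb => hab (by simp_all)
  rw [← prob_compl_eq_one_iff (s := {ω | X ω = 0}) (hX (measurableSet_singleton 0)), hcompl,
    measure_iUnion hdisj fun i => hX (measurableSet_singleton _)]
  simpa only [hgeom] using tsum_ofReal_geometric hθ

lemma measure_lt_succ_of_geometric (hθ : θ ∈ Set.Ioo (0 : ℝ) 1) (hX : Measurable X)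
    (hgeom : ∀ i : ℕ, P {ω | X ω = i + 1} = ENNReal.ofReal (θ * (1 - θ) ^ i)) (i : ℕ) :
    P {ω | X ω < i + 1} = ENNReal.ofReal (1 - (1 - θ) ^ i) := by
  induction i with
  | zero => simpa using measure_eq_zero_of_geometric hθ hX hgeom
  | succ m ih =>
    have hsplit : {ω | X ω < m + 1 + 1} = {ω | X ω < m + 1} ∪ {ω | X ω = m + 1} := by
      ext ω; simp only [Set.mem_union, Set.mem_ofPred_eq]; omega
    have hdisj : Disjoint {ω | X ω < m + 1} {ω | X ω = m + 1} :=
      Set.disjoint_left.mpr fun ω h₁ h₂ => by simp_all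
    have hpow : (1 - θ) ^ m ≤ 1 := pow_le_one₀ (by linarith [hθ.2]) (by linarith [hθ.1])
    rw [hsplit, measure_union hdisj (hX (measurableSet_singleton _)), ih, hgeom,
      ← ENNReal.ofReal_add (by linarith) (mul_nonneg hθ.1.le (pow_nonneg (by linarith [hθ.2]) _))]
    congr 1
    ring

lemma measure_maxMultStep_eq_of_geometric (hθ : θ ∈ Set.Ioo (0 : ℝ) 1) (hX : Measurable X)
    (hgeom : ∀ i : ℕ, P {ω | X ω = i + 1} = ENNReal.ofReal (θ * (1 - θ) ^ i))
    {i : ℕ} (hi : 1 ≤ i) (k j l : ℕ) :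
    P (X ⁻¹' {x | maxMultStep (i, k) x = (j, l)}) = ENNReal.ofReal (maxMultTrans θ i k j l) := by
  obtain ⟨i, rfl⟩ := Nat.exists_eq_add_of_le' hi
  rw [setOf_maxMultStep_eq, maxMultTrans]
  split_ifs with h₁ h₂ h₃
  · obtain ⟨j, rfl⟩ : ∃ j', j = j' + 1 := ⟨j - 1, by omega⟩
    exact hgeom j
  · exact hgeom i
  · exact measure_lt_succ_of_geometric hθ hX hgeom i
  · simp

end Geometric

section Independence

variable {Ω ι β : Type*} [MeasurableSpace Ω] {P : Measure Ω}
  [MeasurableSpace β] [Countable β] [MeasurableSingletonClass β] {ξ : ι → Ω → β}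
  {s : Finset ι} {p : (ι → β) → Prop}

lemma measurableSet_setOf_of_dependsOn (hmeas : ∀ a, Measurable (ξ a)) (hp : DependsOn p ↑s) :
    MeasurableSet {ω | p (ξ · ω)} := by
  obtain ⟨q, rfl⟩ := dependsOn_iff_exists_comp.mp hp
  exact measurable_pi_lambda (fun ω (a : s) => ξ a ω) (fun a => hmeas a)
    (Set.to_countable {z | q z}).measurableSet

lemma ProbabilityTheory.iIndepFun.cond_preimage_of_dependsOn (hmeas : ∀ a, Measurable (ξ a))
    (hindep : iIndepFun ξ P) {m : ι} (hm : m ∉ s) (hp : DependsOn p ↑s)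
    (hpos : P {ω | p (ξ · ω)} ≠ 0) (S : Set β) :
    P[ξ m ⁻¹' S | {ω | p (ξ · ω)}] = P (ξ m ⁻¹' S) := by
  have := hindep.isProbabilityMeasure
  rw [cond_apply (measurableSet_setOf_of_dependsOn hmeas hp)]
  obtain ⟨q, rfl⟩ := dependsOn_iff_exists_comp.mp hp
  have hTm : IndepFun (fun ω (a : s) => ξ a ω) (ξ m) P :=
    (hindep.indepFun_finset s {m} (disjoint_singleton_right.mpr hm) hmeas).comp measurable_id
      (measurable_pi_apply (⟨m, mem_singleton_self m⟩ : ({m} : Finset ι)))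
  have hB : {ω | (q ∘ (↑s : Set ι).domRestrict) (ξ · ω)} =
      (fun ω (a : s) => ξ a ω) ⁻¹' {z | q z} := rfl
  rw [hB] at hpos ⊢
  rw [hTm.measure_inter_preimage_eq_mul {z | q z} S (Set.to_countable _).measurableSet
      (Set.to_countable _).measurableSet,
    ← mul_assoc, ENNReal.inv_mul_cancel hpos (measure_ne_top _ _), one_mul]

end Independence

theorem maxMult_is_markov_chain
    {Ω : Type*} [MeasurableSpace Ω] (P : Measure Ω) [IsProbabilityMeasure P]
    (θ : ℝ) (hθ : θ ∈ Set.Ioo (0:ℝ) 1)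
    (ξ : ℕ → Ω → ℕ)
    (hmeas : ∀ a, Measurable (ξ a))
    (hindep : iIndepFun ξ P)
    (hgeom : ∀ a, ∀ i : ℕ, P {ω | ξ a ω = i + 1} = ENNReal.ofReal (θ * (1 - θ) ^ i))
    (M : ℕ → Ω → ℕ) (hM : ∀ n ω, M n ω = (Finset.range n).sup (fun a => ξ a ω))
    (L : ℕ → Ω → ℕ)
    (hL : ∀ n ω, L n ω = ((Finset.range n).filter (fun a => ξ a ω = M n ω)).card)
    (Y : ℕ → Ω → ℕ × ℕ) (hY : ∀ n ω, Y n ω = (M n ω, L n ω))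
    (n : ℕ) (hn : 1 ≤ n) (y : ℕ → ℕ × ℕ) (i k j l : ℕ) (hy : y n = (i, k))
    (hpos : P {ω | ∀ s ∈ Finset.Icc 1 n, Y s ω = y s} ≠ 0) :
    P[{ω | Y (n + 1) ω = (j, l)} | {ω | ∀ s ∈ Finset.Icc 1 n, Y s ω = y s}] =
      ENNReal.ofReal (maxMultTrans θ i k j l) := by
  have hYξ : ∀ s ω, Y s ω = maxMult (ξ · ω) s := fun s ω => by rw [hY, hL, hM]; rfl
  set history : (ℕ → ℕ) → Prop := fun x => ∀ s ∈ Icc 1 n, maxMult x s = y s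
  have hhistory : DependsOn history ↑(range n) := dependsOn_forall_maxMult_eq y n
  have hB : {ω | ∀ s ∈ Icc 1 n, Y s ω = y s} = {ω | history (ξ · ω)} := by
    simp only [hYξ, history]
  have hBmeas := measurableSet_setOf_of_dependsOn hmeas hhistory
  have hstep : {ω | history (ξ · ω)} ∩ {ω | Y (n + 1) ω = (j, l)} =
      {ω | history (ξ · ω)} ∩ ξ n ⁻¹' {x | maxMultStep (i, k) x = (j, l)} := by
    ext ω
    refine and_congr_right fun hω => ?_
    rw [Set.mem_ofPred_eq, hYξ, maxMult_succ, hω n (mem_Icc.mpr ⟨hn, le_rfl⟩), hy]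
    rfl
  rw [hB] at hpos ⊢
  have hi : 1 ≤ i := by
    by_contra! hi
    refine hpos (measure_mono_null (fun ω hω => ?_)
      (measure_eq_zero_of_geometric hθ (hmeas 0) (hgeom 0)))
    have h0 := le_maxMult_fst (ξ · ω) hn
    rw [hω n (mem_Icc.mpr ⟨hn, le_rfl⟩), hy] at h0
    simp only [Set.mem_ofPred_eq]
    omega
  rw [← cond_inter_self hBmeas, hstep, cond_inter_self hBmeas,
    hindep.cond_preimage_of_dependsOn hmeas notMem_range_self hhistory hpos,
    measure_maxMultStep_eq_of_geometric hθ (hmeas n) (hgeom n) hi]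
end
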